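/- arXiv:1503.01961 — 3 statements merged into one kernel-verified Lean document; each statement's English description precedes it below -/
import Mathlib

section
/- Let W : D → ℂ^{N×N} be measurable and positive definite a.e., w : D → ℂ a scalar weight, and r : D → ℂ^N a unit vector valued function. If the function w^{1/p}·‖W^{-1/p} r‖ is essentially bounded by a constant C, then the projection P_r : L^p(W) → L^p(w) given by P_r(f) = ⟨f, r⟩ is bounded, i.e. there is a constant C' such that ‖⟨f, r⟩‖_{L^p(w)} ≤ C'·‖f‖_{L^p(W)} for all f ∈ L^p(W). -/
open MeasureTheory ENNReal ComplexInnerProductSpace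
open scoped ComplexOrder

/-- The real power `A ^ s` of a Hermitian matrix, via the functional calculus
(junk value `0` if `A` is not Hermitian). -/
noncomputable def mpow {N : ℕ} (A : Matrix (Fin N) (Fin N) ℂ) (s : ℝ) :
    Matrix (Fin N) (Fin N) ℂ :=
  if hA : A.IsHermitian then hA.cfc (fun x => x ^ s) else 0

lemma mpow_eq {N : ℕ} {A : Matrix (Fin N) (Fin N) ℂ} (hA : A.IsHermitian) (s : ℝ) :
    mpow A s = (hA.eigenvectorUnitary : Matrix (Fin N) (Fin N) ℂ) *
      Matrix.diagonal ((RCLike.ofReal : ℝ → ℂ) ∘ (fun x : ℝ => x ^ s) ∘ hA.eigenvalues) *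
      star (hA.eigenvectorUnitary : Matrix (Fin N) (Fin N) ℂ) := by
  rw [mpow, dif_pos hA, Matrix.IsHermitian.cfc, Unitary.conjStarAlgAut_apply]

lemma mpow_isHermitian {N : ℕ} {A : Matrix (Fin N) (Fin N) ℂ} (hA : A.IsHermitian) (s : ℝ) :
    (mpow A s).IsHermitian := by
  have hd : (Matrix.diagonal
      ((RCLike.ofReal : ℝ → ℂ) ∘ (fun x : ℝ => x ^ s) ∘ hA.eigenvalues)).IsHermitian :=
    Matrix.isHermitian_diagonal_iff.mpr fun i => by
      simp [IsSelfAdjoint, RCLike.star_def, RCLike.conj_ofReal]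
  rw [mpow_eq hA s, Matrix.IsHermitian, Matrix.conjTranspose_mul, Matrix.conjTranspose_mul,
    Matrix.star_eq_conjTranspose, Matrix.conjTranspose_conjTranspose, hd.eq, mul_assoc]

lemma mpow_neg_mul {N : ℕ} {A : Matrix (Fin N) (Fin N) ℂ} (hA : A.PosDef) (s : ℝ) :
    mpow A (-s) * mpow A s = 1 := by
  have h := hA.1
  rw [mpow_eq h, mpow_eq h]
  simp only [mul_assoc]
  rw [← mul_assoc (star (h.eigenvectorUnitary : Matrix (Fin N) (Fin N) ℂ))
    (h.eigenvectorUnitary : Matrix (Fin N) (Fin N) ℂ),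
    Unitary.coe_star_mul_self, one_mul,
    ← mul_assoc (Matrix.diagonal _) (Matrix.diagonal _), Matrix.diagonal_mul_diagonal]
  have : (fun i => ((RCLike.ofReal : ℝ → ℂ) ∘ (fun x : ℝ => x ^ (-s)) ∘ h.eigenvalues) i *
      ((RCLike.ofReal : ℝ → ℂ) ∘ (fun x : ℝ => x ^ s) ∘ h.eigenvalues) i)
      = fun _ : Fin N => (1 : ℂ) := by
    funext i
    have hpos : 0 < h.eigenvalues i := hA.eigenvalues_pos i
    have : h.eigenvalues i ^ (-s) * h.eigenvalues i ^ s = 1 := by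
      rw [Real.rpow_neg hpos.le]
      exact inv_mul_cancel₀ (Real.rpow_pos_of_pos hpos s).ne'
    simp only [Function.comp_apply, ← RCLike.ofReal_mul, this, RCLike.ofReal_one]
  rw [this, Matrix.diagonal_one, one_mul]
  exact (Matrix.mem_unitaryGroup_iff).mp h.eigenvectorUnitary.2

lemma toEuclideanLin_mul_apply {N : ℕ} (A B : Matrix (Fin N) (Fin N) ℂ)
    (v : EuclideanSpace ℂ (Fin N)) :
    Matrix.toEuclideanLin (A * B) v = Matrix.toEuclideanLin A (Matrix.toEuclideanLin B v) := by
  simp [Matrix.toEuclideanLin_apply, Matrix.mulVec_mulVec]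

/-- Sufficiency in the projection theorem: if `w^{1/p}‖W^{-1/p}r‖ ≤ C` a.e., then
`P_r f = ⟨f, r⟩` is bounded from `L^p(W)` to `L^p(w)`. -/
theorem projection_bounded_of_ae_bound
    {N : ℕ} {D : Type*} [MeasurableSpace D] (μ : Measure D)
    (p : ℝ) (hp : 1 < p)
    (W : D → Matrix (Fin N) (Fin N) ℂ)
    (hWmeas : ∀ i j, Measurable fun t => W t i j)
    (hWpos : ∀ᵐ t ∂μ, (W t).PosDef)
    (w : D → ℝ) (hwmeas : Measurable w) (hwpos : ∀ᵐ t ∂μ, 0 < w t)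
    (r : D → EuclideanSpace ℂ (Fin N))
    (hrmeas : ∀ k, Measurable fun t => (⟪EuclideanSpace.single k (1 : ℂ), r t⟫ : ℂ))
    (hr : ∀ᵐ t ∂μ, ‖r t‖ = 1)
    (C : ℝ)
    (hbound : ∀ᵐ t ∂μ,
      (w t) ^ (1 / p) *
        ‖Matrix.toEuclideanLin (mpow (W t) (-(1 / p))) (r t)‖ ≤ C) :
    ∃ C' : ℝ≥0∞, C' ≠ ∞ ∧
      ∀ f : D → EuclideanSpace ℂ (Fin N),
        (∀ k, Measurable fun t => (⟪EuclideanSpace.single k (1 : ℂ), f t⟫ : ℂ)) →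
        (∫⁻ t, (‖(⟪f t, r t⟫ : ℂ)‖₊ : ℝ≥0∞) ^ p * ENNReal.ofReal (w t) ∂μ) ^ (1 / p)
          ≤ C' *
            (∫⁻ t, (‖Matrix.toEuclideanLin (mpow (W t) (1 / p)) (f t)‖₊ : ℝ≥0∞) ^ p ∂μ)
              ^ (1 / p) := by
  have hp0 : (0 : ℝ) < p := lt_trans one_pos hp
  have hip : (0 : ℝ) ≤ 1 / p := by positivity
  refine ⟨ENNReal.ofReal C, ENNReal.ofReal_ne_top, fun f _ => ?_⟩
  -- pointwise bound on integrands
  have key : ∀ᵐ t ∂μ,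
      (‖(⟪f t, r t⟫ : ℂ)‖₊ : ℝ≥0∞) ^ p * ENNReal.ofReal (w t)
        ≤ ENNReal.ofReal C ^ p *
          (‖Matrix.toEuclideanLin (mpow (W t) (1 / p)) (f t)‖₊ : ℝ≥0∞) ^ p := by
    filter_upwards [hWpos, hwpos, hr, hbound] with t hW hw hr1 hb
    set A := W t
    set Tf := Matrix.toEuclideanLin (mpow A (1 / p)) (f t)
    set Br := Matrix.toEuclideanLin (mpow A (-(1 / p))) (r t)
    -- ⟪f, r⟫ = ⟪Tf, Br⟫
    have hrr : r t = Matrix.toEuclideanLin (mpow A (1 / p)) Br := by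
      rw [← toEuclideanLin_mul_apply]
      have : mpow A (1 / p) * mpow A (-(1 / p)) = 1 := by
        have := mpow_neg_mul hW (-(1 / p))
        rwa [neg_neg] at this
      rw [this]
      simp [Matrix.toEuclideanLin_apply, Matrix.one_mulVec]
    have hinner : (⟪f t, r t⟫ : ℂ) = ⟪Tf, Br⟫ := by
      rw [hrr]
      have hadj : Matrix.toEuclideanLin (mpow A (1 / p)) =
          LinearMap.adjoint (Matrix.toEuclideanLin (mpow A (1 / p))) := by
        conv_lhs => rw [← (mpow_isHermitian hW.1 (1 / p)).eq]
        exact Matrix.toEuclideanLin_conjTranspose_eq_adjoint _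
      conv_lhs => rw [hadj]
      rw [LinearMap.adjoint_inner_right]
    -- real inequality
    have hC : 0 ≤ C := le_trans (by positivity) hb
    have hreal : ‖(⟪f t, r t⟫ : ℂ)‖ * (w t) ^ (1 / p) ≤ C * ‖Tf‖ := by
      calc ‖(⟪f t, r t⟫ : ℂ)‖ * (w t) ^ (1 / p)
          ≤ ‖Tf‖ * ‖Br‖ * (w t) ^ (1 / p) := by
            apply mul_le_mul_of_nonneg_right _ (by positivity)
            rw [hinner]; exact norm_inner_le_norm _ _
        _ = ‖Tf‖ * ((w t) ^ (1 / p) * ‖Br‖) := by ring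
        _ ≤ ‖Tf‖ * C := mul_le_mul_of_nonneg_left hb (norm_nonneg _)
        _ = C * ‖Tf‖ := mul_comm _ _
    -- lift to ℝ≥0∞
    have hw1 : w t = ((w t) ^ (1 / p)) ^ p := by
      rw [← Real.rpow_mul hw.le, one_div, inv_mul_cancel₀ hp0.ne', Real.rpow_one]
    calc (‖(⟪f t, r t⟫ : ℂ)‖₊ : ℝ≥0∞) ^ p * ENNReal.ofReal (w t)
        = ENNReal.ofReal (‖(⟪f t, r t⟫ : ℂ)‖ ^ p) * ENNReal.ofReal (w t) := by
          rw [← enorm_eq_nnnorm, ← ofReal_norm, ENNReal.ofReal_rpow_of_nonneg (norm_nonneg _) hp0.le]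
      _ = ENNReal.ofReal ((‖(⟪f t, r t⟫ : ℂ)‖ * (w t) ^ (1 / p)) ^ p) := by
          rw [← ENNReal.ofReal_mul (by positivity)]
          congr 1
          rw [Real.mul_rpow (norm_nonneg _) (by positivity), ← hw1]
      _ ≤ ENNReal.ofReal ((C * ‖Tf‖) ^ p) := by
          apply ENNReal.ofReal_le_ofReal
          exact Real.rpow_le_rpow (by positivity) hreal hp0.le
      _ = ENNReal.ofReal C ^ p * (‖Tf‖₊ : ℝ≥0∞) ^ p := by
          rw [Real.mul_rpow hC (norm_nonneg _), ENNReal.ofReal_mul (by positivity),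
            ← ENNReal.ofReal_rpow_of_nonneg hC hp0.le,
            ← ENNReal.ofReal_rpow_of_nonneg (norm_nonneg _) hp0.le, ofReal_norm, enorm_eq_nnnorm]
  calc (∫⁻ t, (‖(⟪f t, r t⟫ : ℂ)‖₊ : ℝ≥0∞) ^ p * ENNReal.ofReal (w t) ∂μ) ^ (1 / p)
      ≤ (∫⁻ t, ENNReal.ofReal C ^ p *
          (‖Matrix.toEuclideanLin (mpow (W t) (1 / p)) (f t)‖₊ : ℝ≥0∞) ^ p ∂μ) ^ (1 / p) :=
        ENNReal.rpow_le_rpow (lintegral_mono_ae key) hip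
    _ = (ENNReal.ofReal C ^ p *
          ∫⁻ t, (‖Matrix.toEuclideanLin (mpow (W t) (1 / p)) (f t)‖₊ : ℝ≥0∞) ^ p ∂μ) ^ (1 / p) := by
        rw [lintegral_const_mul' _ _ (ENNReal.rpow_ne_top_of_nonneg hp0.le ENNReal.ofReal_ne_top)]
    _ = ENNReal.ofReal C *
          (∫⁻ t, (‖Matrix.toEuclideanLin (mpow (W t) (1 / p)) (f t)‖₊ : ℝ≥0∞) ^ p ∂μ) ^ (1 / p) := by
        rw [ENNReal.mul_rpow_of_nonneg _ _ hip, ← ENNReal.rpow_mul,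
          mul_one_div_cancel hp0.ne', ENNReal.rpow_one]
end

section
/- Let W(x) = [[√x + 1/√x, i/√x], [-i/√x, 1/√x]] on (0,1]. Then the inverse is W(x)^{-1} = [[1/√x, -i/√x], [i/√x, √x + 1/√x]], and for 0 ≤ a < b ≤ 1 the matrix products of averages satisfy (∫_a^b W(x) dx)·(∫_a^b W(x)^{-1} dx) = (4/3)·((b-a)² − √(ab)·(√b − √a)²)·I₂, where I₂ is the 2×2 identity matrix. -/
open MeasureTheory ENNReal ComplexInnerProductSpace
open scoped ComplexOrder

/-- The example matrix weight `W(x) = [[√x + 1/√x, i/√x], [-i/√x, 1/√x]]`. -/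
noncomputable def Wex (x : ℝ) : Matrix (Fin 2) (Fin 2) ℂ :=
  !![((Real.sqrt x + 1 / Real.sqrt x : ℝ) : ℂ), Complex.I / ((Real.sqrt x : ℝ) : ℂ);
     -Complex.I / ((Real.sqrt x : ℝ) : ℂ), ((1 / Real.sqrt x : ℝ) : ℂ)]

/-- The claimed inverse `W(x)⁻¹ = [[1/√x, -i/√x], [i/√x, √x + 1/√x]]`. -/
noncomputable def WexInv (x : ℝ) : Matrix (Fin 2) (Fin 2) ℂ :=
  !![((1 / Real.sqrt x : ℝ) : ℂ), -Complex.I / ((Real.sqrt x : ℝ) : ℂ);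
     Complex.I / ((Real.sqrt x : ℝ) : ℂ), ((Real.sqrt x + 1 / Real.sqrt x : ℝ) : ℂ)]

/-- Entrywise integral `∫_a^b W(x) dx`. -/
noncomputable def Wab (a b : ℝ) : Matrix (Fin 2) (Fin 2) ℂ :=
  Matrix.of fun i j => ∫ x in a..b, Wex x i j

/-- Entrywise integral `∫_a^b W(x)⁻¹ dx`. -/
noncomputable def WabInv (a b : ℝ) : Matrix (Fin 2) (Fin 2) ℂ :=
  Matrix.of fun i j => ∫ x in a..b, WexInv x i j

open intervalIntegral in
lemma int_sqrt' (a b : ℝ) (ha : 0 ≤ a) (hab : a ≤ b) :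
    ∫ x in a..b, Real.sqrt x = 2/3 * (Real.sqrt b ^ 3 - Real.sqrt a ^ 3) := by
  rw [intervalIntegral.integral_congr (g := fun x => x ^ ((1:ℝ)/2))
    (fun x _ => Real.sqrt_eq_rpow x), integral_rpow (Or.inl (by norm_num))]
  have hb : 0 ≤ b := le_trans ha hab
  have h : ∀ c : ℝ, 0 ≤ c → c ^ ((1:ℝ)/2 + 1) = Real.sqrt c ^ 3 := by
    intro c hc
    rw [show ((1:ℝ)/2 + 1) = (1/2) * (3:ℕ) by norm_num, Real.rpow_mul hc,
      ← Real.sqrt_eq_rpow, Real.rpow_natCast]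
  rw [h a ha, h b hb]; ring

open intervalIntegral in
lemma int_inv_sqrt' (a b : ℝ) (ha : 0 ≤ a) (hab : a ≤ b) :
    ∫ x in a..b, 1 / Real.sqrt x = 2 * (Real.sqrt b - Real.sqrt a) := by
  have hco : ∀ x ∈ Set.uIcc a b, 1 / Real.sqrt x = x ^ (-((1:ℝ)/2)) := by
    intro x hx
    rw [Set.uIcc_of_le hab] at hx
    have hx0 : 0 ≤ x := le_trans ha hx.1
    rw [Real.rpow_neg hx0, ← Real.sqrt_eq_rpow, one_div]
  rw [intervalIntegral.integral_congr hco, integral_rpow (Or.inl (by norm_num))]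
  rw [show (-((1:ℝ)/2) + 1) = 1/2 by norm_num, ← Real.sqrt_eq_rpow, ← Real.sqrt_eq_rpow]
  ring

open intervalIntegral in
lemma intble_inv_sqrt' (a b : ℝ) (ha : 0 ≤ a) (hab : a ≤ b) :
    IntervalIntegrable (fun x => 1 / Real.sqrt x) volume a b := by
  apply (intervalIntegrable_rpow' (r := -(1/2)) (by norm_num)).congr
  intro x hx
  dsimp only
  rw [Set.uIoc_of_le hab] at hx
  have hx0 : 0 ≤ x := le_of_lt (lt_of_le_of_lt ha hx.1)
  rw [Real.rpow_neg hx0, ← Real.sqrt_eq_rpow, one_div]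

/-- `W(x)⁻¹` is as claimed, and the product of the interval integrals of `W` and `W⁻¹`
is the asserted scalar multiple of the identity. -/
theorem Wab_mul_WabInv (a b : ℝ) (ha : 0 ≤ a) (hab : a < b) (hb : b ≤ 1) :
    (∀ x ∈ Set.Ioc (0 : ℝ) 1, (Wex x)⁻¹ = WexInv x) ∧
    Wab a b * WabInv a b =
      ((((4 : ℝ) / 3) * ((b - a) ^ 2 -
          Real.sqrt (a * b) * (Real.sqrt b - Real.sqrt a) ^ 2) : ℝ) : ℂ) •
        (1 : Matrix (Fin 2) (Fin 2) ℂ) := by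
  constructor
  · intro x hx
    have hx0 : 0 < x := hx.1
    have hsx : Real.sqrt x ≠ 0 := ne_of_gt (Real.sqrt_pos.mpr hx0)
    have hsxC : ((Real.sqrt x : ℝ) : ℂ) ≠ 0 := by exact_mod_cast hsx
    have hmul : ((Real.sqrt x : ℝ) : ℂ) * ((Real.sqrt x : ℝ) : ℂ) = (x : ℂ) := by
      rw [← Complex.ofReal_mul, Real.mul_self_sqrt hx0.le]
    apply Matrix.inv_eq_right_inv
    rw [Wex, WexInv, Matrix.mul_fin_two, Matrix.one_fin_two]
    congr 1 <;> push_cast <;> field_simp <;> ring_nf <;>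
      simp [Complex.I_sq, hmul] <;> ring_nf <;>
      simp [mul_comm, hmul] <;> simp [hsxC]
  · set sa := Real.sqrt a
    set sb := Real.sqrt b
    have hab' : a ≤ b := hab.le
    have hb0 : 0 ≤ b := le_trans ha hab'
    set P : ℝ := 2/3 * (sb ^ 3 - sa ^ 3) with hP
    set S : ℝ := 2 * (sb - sa) with hS
    have hintS : IntervalIntegrable (fun x => Real.sqrt x) volume a b :=
      Real.continuous_sqrt.intervalIntegrable a b
    have hintI := intble_inv_sqrt' a b ha hab'
    have hPS : (∫ x in a..b, (Real.sqrt x + 1 / Real.sqrt x)) = P + S := by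
      rw [intervalIntegral.integral_add hintS hintI, int_sqrt' a b ha hab',
        int_inv_sqrt' a b ha hab']
    have hSint : (∫ x in a..b, 1 / Real.sqrt x) = S := int_inv_sqrt' a b ha hab'
    have e00 : (∫ x in a..b, Wex x 0 0) = ((P + S : ℝ) : ℂ) := by
      simp only [Wex, Matrix.of_apply, Matrix.cons_val_zero, Matrix.cons_val_one,
        Matrix.head_cons, Matrix.head_fin_const]
      rw [intervalIntegral.integral_ofReal, hPS]
    have hIdiv : ∀ x : ℝ, Complex.I / ((Real.sqrt x : ℝ) : ℂ)
        = Complex.I * ((1 / Real.sqrt x : ℝ) : ℂ) := by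
      intro x; push_cast; ring
    have eI : (∫ x in a..b, Complex.I / ((Real.sqrt x : ℝ) : ℂ))
        = Complex.I * ((S : ℝ) : ℂ) := by
      simp only [hIdiv]
      rw [intervalIntegral.integral_const_mul, intervalIntegral.integral_ofReal, hSint]
    have e01 : (∫ x in a..b, Wex x 0 1) = Complex.I * ((S : ℝ) : ℂ) := by
      simp only [Wex, Matrix.cons_val', Matrix.cons_val_zero, Matrix.cons_val_one,
        Matrix.head_cons, Matrix.empty_val', Matrix.cons_val_fin_one]
      exact eI
    have e10 : (∫ x in a..b, Wex x 1 0) = -(Complex.I * ((S : ℝ) : ℂ)) := by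
      simp only [Wex, Matrix.of_apply, Matrix.cons_val_zero, Matrix.cons_val_one,
        Matrix.head_cons, Matrix.head_fin_const, neg_div]
      rw [intervalIntegral.integral_neg, eI]
    have e11 : (∫ x in a..b, Wex x 1 1) = ((S : ℝ) : ℂ) := by
      simp only [Wex, Matrix.of_apply, Matrix.cons_val_zero, Matrix.cons_val_one,
        Matrix.head_cons, Matrix.head_fin_const]
      rw [intervalIntegral.integral_ofReal, hSint]
    have f00 : (∫ x in a..b, WexInv x 0 0) = ((S : ℝ) : ℂ) := by
      simp only [WexInv, Matrix.of_apply, Matrix.cons_val_zero, Matrix.cons_val_one,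
        Matrix.head_cons, Matrix.head_fin_const]
      rw [intervalIntegral.integral_ofReal, hSint]
    have f01 : (∫ x in a..b, WexInv x 0 1) = -(Complex.I * ((S : ℝ) : ℂ)) := by
      simp only [WexInv, Matrix.of_apply, Matrix.cons_val_zero, Matrix.cons_val_one,
        Matrix.head_cons, Matrix.head_fin_const, neg_div]
      rw [intervalIntegral.integral_neg, eI]
    have f10 : (∫ x in a..b, WexInv x 1 0) = Complex.I * ((S : ℝ) : ℂ) := by
      simp only [WexInv, Matrix.of_apply, Matrix.cons_val_zero, Matrix.cons_val_one,
        Matrix.head_cons, Matrix.head_fin_const]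
      exact eI
    have f11 : (∫ x in a..b, WexInv x 1 1) = ((P + S : ℝ) : ℂ) := by
      simp only [WexInv, Matrix.of_apply, Matrix.cons_val_zero, Matrix.cons_val_one,
        Matrix.head_cons, Matrix.head_fin_const]
      rw [intervalIntegral.integral_ofReal, hPS]
    have hW : Wab a b = !![((P + S : ℝ) : ℂ), Complex.I * ((S : ℝ) : ℂ);
        -(Complex.I * ((S : ℝ) : ℂ)), ((S : ℝ) : ℂ)] := by
      ext i j
      fin_cases i <;> fin_cases j <;>
        simp only [Wab, Matrix.of_apply, Matrix.cons_val', Matrix.cons_val_zero,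
          Matrix.cons_val_one, Matrix.head_cons, Matrix.empty_val',
          Matrix.cons_val_fin_one, Matrix.head_fin_const]
      · exact e00
      · exact e01
      · exact e10
      · exact e11
    have hWI : WabInv a b = !![((S : ℝ) : ℂ), -(Complex.I * ((S : ℝ) : ℂ));
        Complex.I * ((S : ℝ) : ℂ), ((P + S : ℝ) : ℂ)] := by
      ext i j
      fin_cases i <;> fin_cases j <;>
        simp only [WabInv, Matrix.of_apply, Matrix.cons_val', Matrix.cons_val_zero,
          Matrix.cons_val_one, Matrix.head_cons, Matrix.empty_val',
          Matrix.cons_val_fin_one, Matrix.head_fin_const]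
      · exact f00
      · exact f01
      · exact f10
      · exact f11
    have hkey : P * S = 4 / 3 * ((b - a) ^ 2 - Real.sqrt (a * b) * (sb - sa) ^ 2) := by
      have ha2 : sa ^ 2 = a := Real.sq_sqrt ha
      have hb2 : sb ^ 2 = b := Real.sq_sqrt hb0
      have hsab : Real.sqrt (a * b) = sa * sb := Real.sqrt_mul ha b
      rw [hP, hS, hsab, ← ha2, ← hb2]; ring
    have hkeyC : ((P:ℝ):ℂ) * ((S:ℝ):ℂ)
        = 4 / 3 * (((b:ℂ) - (a:ℂ)) ^ 2 - ((Real.sqrt (a*b) : ℝ):ℂ) * (((sb:ℝ):ℂ) - ((sa:ℝ):ℂ)) ^ 2) := by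
      have := congrArg (fun t : ℝ => (t : ℂ)) hkey
      push_cast at this
      convert this using 2 <;> push_cast <;> ring
    rw [hW, hWI, Matrix.mul_fin_two]
    have h2 : Complex.I * ((S : ℝ) : ℂ) * (Complex.I * ((S : ℝ) : ℂ))
        = -(((S : ℝ) : ℂ) * ((S : ℝ) : ℂ)) := by
      rw [show Complex.I * ((S:ℝ):ℂ) * (Complex.I * ((S:ℝ):ℂ))
        = Complex.I ^ 2 * (((S:ℝ):ℂ) * ((S:ℝ):ℂ)) by ring, Complex.I_sq]; ring
    ext i j
    fin_cases i <;> fin_cases j <;>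
      simp only [Matrix.smul_apply, Matrix.one_apply, Matrix.cons_val', Matrix.cons_val_zero,
        Matrix.cons_val_one, Matrix.head_cons, Matrix.empty_val', Matrix.cons_val_fin_one,
        Matrix.head_fin_const, smul_eq_mul] <;>
      [skip; skip; skip; skip]
    · rw [show (((P+S:ℝ):ℂ)) * ((S:ℝ):ℂ) + Complex.I * ((S:ℝ):ℂ) * (Complex.I * ((S:ℝ):ℂ))
        = (((P+S:ℝ):ℂ)) * ((S:ℝ):ℂ) - ((S:ℝ):ℂ) * ((S:ℝ):ℂ) by rw [h2]; ring]
      push_cast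
      rw [show ((P:ℂ)+S) * S - S * S = (P:ℂ) * S by ring]
      norm_num
      exact hkeyC
    · push_cast; norm_num; ring
    · push_cast; norm_num; ring
    · rw [show -(Complex.I * ((S:ℝ):ℂ)) * -(Complex.I * ((S:ℝ):ℂ))
          + ((S:ℝ):ℂ) * ((P+S:ℝ):ℂ)
        = ((S:ℝ):ℂ) * ((P+S:ℝ):ℂ) - ((S:ℝ):ℂ) * ((S:ℝ):ℂ) by
          rw [show -(Complex.I * ((S:ℝ):ℂ)) * -(Complex.I * ((S:ℝ):ℂ))
            = Complex.I * ((S:ℝ):ℂ) * (Complex.I * ((S:ℝ):ℂ)) by ring, h2]; ring]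
      push_cast
      rw [show (S:ℂ) * ((P:ℂ)+S) - S * S = (P:ℂ) * S by ring]
      norm_num
      exact hkeyC
end

section
/- Let W(x) = [[√x + 1/√x, i/√x], [−i/√x, 1/√x]] on (0,1] and for 0 ≤ a < b ≤ 1 set W_{a,b} = ∫_a^b W(x) dx and W^{(−1)}_{a,b} = ∫_a^b W(x)^{−1} dx. Then the Frobenius norm of the product of normalized square roots satisfies ‖(W_{a,b}/(b−a))^{1/2}·(W^{(−1)}_{a,b}/(b−a))^{1/2}‖_F = (1/(b−a))·√((8/3)((b−a)² − √(ab)(√b−√a)²)) ≤ 2√2/√3. -/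
open MeasureTheory ENNReal ComplexInnerProductSpace
open scoped ComplexOrder

/-- The Frobenius norm `‖M‖_F = √(∑ |m_{ij}|²)`. -/
noncomputable def frobNorm {n : ℕ} (M : Matrix (Fin n) (Fin n) ℂ) : ℝ :=
  Real.sqrt (∑ i, ∑ j, ‖M i j‖ ^ 2)

section Aux
open Matrix intervalIntegral
open scoped MatrixOrder

/-! ### Auxiliary lemmas -/

lemma mpow_half' {N : ℕ} {A : Matrix (Fin N) (Fin N) ℂ} (hA : A.PosSemidef) :
    mpow A (1 / 2) = CFC.sqrt A := by
  rw [mpow, dif_pos hA.1, ← hA.1.cfc_eq, CFC.sqrt_eq_real_sqrt A (Matrix.nonneg_iff_posSemidef.mpr hA),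
    cfcₙ_eq_cfc]
  refine cfc_congr (a := A) ?_
  intro x _
  simp [Real.sqrt_eq_rpow]

lemma trace_eq' {N : ℕ} {A B : Matrix (Fin N) (Fin N) ℂ} (hA : A.PosSemidef)
    (hB : B.PosSemidef) :
    ((mpow A (1/2) * mpow B (1/2))ᴴ * (mpow A (1/2) * mpow B (1/2))).trace
      = (A * B).trace := by
  rw [mpow_half' hA, mpow_half' hB, Matrix.conjTranspose_mul,
    ← Matrix.star_eq_conjTranspose, ← Matrix.star_eq_conjTranspose,
    (CFC.sqrt_nonneg A).isSelfAdjoint.star_eq, (CFC.sqrt_nonneg B).isSelfAdjoint.star_eq]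
  have h1 : CFC.sqrt B * CFC.sqrt A * (CFC.sqrt A * CFC.sqrt B) = CFC.sqrt B * (A * CFC.sqrt B) := by
    rw [mul_assoc, ← mul_assoc (CFC.sqrt A), CFC.sqrt_mul_sqrt_self A (Matrix.nonneg_iff_posSemidef.mpr hA)]
  rw [h1, Matrix.trace_mul_comm, mul_assoc, CFC.sqrt_mul_sqrt_self B (Matrix.nonneg_iff_posSemidef.mpr hB)]

lemma frob_sq' {N : ℕ} (M : Matrix (Fin N) (Fin N) ℂ) :
    (Mᴴ * M).trace = ((∑ i, ∑ j, ‖M i j‖ ^ 2 : ℝ) : ℂ) := by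
  push_cast
  rw [Matrix.trace, Finset.sum_comm]
  simp [Matrix.diag, Matrix.mul_apply, Complex.conj_mul', Complex.sq_norm, ← Complex.normSq_eq_norm_sq,
    Complex.ofReal_sum]

noncomputable def M1mat (p q : ℝ) : Matrix (Fin 2) (Fin 2) ℂ :=
  !![(p : ℂ) + q, q * Complex.I; -(q * Complex.I), (q : ℂ)]

noncomputable def M2mat (p q : ℝ) : Matrix (Fin 2) (Fin 2) ℂ :=
  !![(q : ℂ), -(q * Complex.I); q * Complex.I, (p : ℂ) + q]

lemma M1_mul_M2 (p q : ℝ) : M1mat p q * M2mat p q = (((p * q : ℝ)) : ℂ) • 1 := by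
  ext i j
  fin_cases i <;> fin_cases j <;>
    simp [M1mat, M2mat, Matrix.mul_apply, Fin.sum_univ_two, Matrix.one_apply] <;> ring_nf <;>
    simp [Complex.I_sq]

lemma M1_eq (p q : ℝ) :
    M1mat p q = (p : ℂ) • (!![(1:ℂ), 0; 0, 0]ᴴ * !![(1:ℂ), 0; 0, 0])
      + (q:ℂ) • (!![(1:ℂ), Complex.I; 0, 0]ᴴ * !![(1:ℂ), Complex.I; 0, 0]) := by
  ext i j
  fin_cases i <;> fin_cases j <;>
    simp [M1mat, Matrix.mul_apply, Fin.sum_univ_two]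

lemma M2_eq (p q : ℝ) :
    M2mat p q = (p : ℂ) • (!![(0:ℂ), 1; 0, 0]ᴴ * !![(0:ℂ), 1; 0, 0])
      + (q:ℂ) • (!![(1:ℂ), -Complex.I; 0, 0]ᴴ * !![(1:ℂ), -Complex.I; 0, 0]) := by
  ext i j
  fin_cases i <;> fin_cases j <;>
    simp [M2mat, Matrix.mul_apply, Fin.sum_univ_two]

lemma psd_smul' {n : ℕ} {A : Matrix (Fin n) (Fin n) ℂ} (hA : A.PosSemidef) {c : ℝ} (hc : 0 ≤ c) :
    ((c : ℂ) • A).PosSemidef := by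
  constructor
  · rw [Matrix.IsHermitian, Matrix.conjTranspose_smul, hA.1.eq]
    congr 1
    simp
  · intro x
    exact (hA.smul (Complex.zero_le_real.mpr hc)).2 x

lemma M1_psd {p q : ℝ} (hp : 0 ≤ p) (hq : 0 ≤ q) : (M1mat p q).PosSemidef := by
  rw [M1_eq]
  exact Matrix.PosSemidef.add (psd_smul' (Matrix.posSemidef_conjTranspose_mul_self _) hp)
    (psd_smul' (Matrix.posSemidef_conjTranspose_mul_self _) hq)

lemma M2_psd {p q : ℝ} (hp : 0 ≤ p) (hq : 0 ≤ q) : (M2mat p q).PosSemidef := by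
  rw [M2_eq]
  exact Matrix.PosSemidef.add (psd_smul' (Matrix.posSemidef_conjTranspose_mul_self _) hp)
    (psd_smul' (Matrix.posSemidef_conjTranspose_mul_self _) hq)

lemma smul_M1 (r p q : ℝ) : ((r:ℝ):ℂ) • M1mat p q = M1mat (r*p) (r*q) := by
  ext i j
  fin_cases i <;> fin_cases j <;> simp [M1mat] <;> push_cast <;> ring

lemma smul_M2 (r p q : ℝ) : ((r:ℝ):ℂ) • M2mat p q = M2mat (r*p) (r*q) := by
  ext i j
  fin_cases i <;> fin_cases j <;> simp [M2mat] <;> push_cast <;> ring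

/-! ### Integral computations -/

lemma inv_sqrt_eqOn {a b : ℝ} (ha : 0 ≤ a) (hab : a ≤ b) :
    Set.EqOn (fun x : ℝ => 1 / Real.sqrt x) (fun x : ℝ => x ^ (-(1:ℝ)/2)) (Set.uIcc a b) := by
  intro x hx
  rw [Set.uIcc_of_le hab] at hx
  have hx0 : 0 ≤ x := le_trans ha hx.1
  simp only
  rw [neg_div, Real.rpow_neg hx0, ← Real.sqrt_eq_rpow, one_div]

lemma integral_sqrt' {a b : ℝ} (ha : 0 ≤ a) (hab : a ≤ b) :
    ∫ x in a..b, Real.sqrt x = 2/3 * (b * Real.sqrt b - a * Real.sqrt a) := by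
  rw [intervalIntegral.integral_congr (fun x _ => Real.sqrt_eq_rpow x),
    integral_rpow (Or.inl (by norm_num))]
  have hb : 0 ≤ b := le_trans ha hab
  have e : ∀ c : ℝ, 0 ≤ c → c ^ ((1:ℝ)/2 + 1) = c * Real.sqrt c := by
    intro c hc
    rw [Real.rpow_add' hc (by norm_num), Real.rpow_one, ← Real.sqrt_eq_rpow, mul_comm]
  rw [e b hb, e a ha]
  ring

lemma integral_inv_sqrt' {a b : ℝ} (ha : 0 ≤ a) (hab : a ≤ b) :
    ∫ x in a..b, 1 / Real.sqrt x = 2 * (Real.sqrt b - Real.sqrt a) := by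
  rw [intervalIntegral.integral_congr (inv_sqrt_eqOn ha hab),
    integral_rpow (Or.inl (by norm_num))]
  have hb : 0 ≤ b := le_trans ha hab
  have e : ∀ c : ℝ, 0 ≤ c → c ^ (-(1:ℝ)/2 + 1) = Real.sqrt c := by
    intro c hc
    rw [show (-(1:ℝ)/2 + 1) = (1:ℝ)/2 by norm_num, ← Real.sqrt_eq_rpow]
  rw [e b hb, e a ha]
  ring

lemma intInt_inv_sqrt {a b : ℝ} (ha : 0 ≤ a) (hab : a ≤ b) :
    IntervalIntegrable (fun x : ℝ => 1 / Real.sqrt x) volume a b := by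
  have hr : (-1:ℝ) < -(1:ℝ)/2 := by norm_num
  have h : IntervalIntegrable (fun x : ℝ => x ^ (-(1:ℝ)/2)) volume a b :=
    intervalIntegral.intervalIntegrable_rpow' hr
  have hae : (fun x : ℝ => x ^ (-(1:ℝ)/2)) =ᵐ[volume.restrict (Set.uIoc a b)]
      (fun x : ℝ => 1 / Real.sqrt x) :=
    (ae_restrict_iff' measurableSet_uIoc).mpr
      (ae_of_all _ (fun x hx => (inv_sqrt_eqOn ha hab (Set.uIoc_subset_uIcc hx)).symm))
  exact h.congr_ae hae

lemma integral_add_sqrt {a b : ℝ} (ha : 0 ≤ a) (hab : a ≤ b) :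
    ∫ x in a..b, (Real.sqrt x + 1 / Real.sqrt x) =
      2/3 * (b * Real.sqrt b - a * Real.sqrt a) + 2 * (Real.sqrt b - Real.sqrt a) := by
  rw [intervalIntegral.integral_add (Real.continuous_sqrt.intervalIntegrable a b)
    (intInt_inv_sqrt ha hab), integral_sqrt' ha hab, integral_inv_sqrt' ha hab]

lemma integral_ofReal_inv_sqrt {a b : ℝ} (ha : 0 ≤ a) (hab : a ≤ b) :
    ∫ x in a..b, (((1 / Real.sqrt x : ℝ)) : ℂ) = ((2 * (Real.sqrt b - Real.sqrt a) : ℝ) : ℂ) := by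
  rw [intervalIntegral.integral_ofReal, integral_inv_sqrt' ha hab]

lemma integral_I_div_sqrt {a b : ℝ} (ha : 0 ≤ a) (hab : a ≤ b) :
    ∫ x in a..b, Complex.I / ((Real.sqrt x : ℝ) : ℂ)
      = ((2 * (Real.sqrt b - Real.sqrt a) : ℝ) : ℂ) * Complex.I := by
  have h : (fun x : ℝ => Complex.I / ((Real.sqrt x : ℝ) : ℂ))
      = fun x : ℝ => (((1 / Real.sqrt x : ℝ)) : ℂ) * Complex.I := by
    funext x
    push_cast
    ring
  rw [h, intervalIntegral.integral_mul_const, integral_ofReal_inv_sqrt ha hab]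

lemma integral_neg_I_div_sqrt {a b : ℝ} (ha : 0 ≤ a) (hab : a ≤ b) :
    ∫ x in a..b, -Complex.I / ((Real.sqrt x : ℝ) : ℂ)
      = -(((2 * (Real.sqrt b - Real.sqrt a) : ℝ) : ℂ) * Complex.I) := by
  have h : (fun x : ℝ => -Complex.I / ((Real.sqrt x : ℝ) : ℂ))
      = fun x : ℝ => -(Complex.I / ((Real.sqrt x : ℝ) : ℂ)) := by
    funext x; ring
  rw [h, intervalIntegral.integral_neg, integral_I_div_sqrt ha hab]

lemma integral_ofReal_add_sqrt {a b : ℝ} (ha : 0 ≤ a) (hab : a ≤ b) :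
    ∫ x in a..b, ((Real.sqrt x + 1 / Real.sqrt x : ℝ) : ℂ)
      = ((2/3 * (b * Real.sqrt b - a * Real.sqrt a) : ℝ) : ℂ)
        + ((2 * (Real.sqrt b - Real.sqrt a) : ℝ) : ℂ) := by
  rw [intervalIntegral.integral_ofReal, integral_add_sqrt ha hab]
  push_cast
  ring

lemma Wab_eq {a b : ℝ} (ha : 0 ≤ a) (hab : a ≤ b) :
    Wab a b = M1mat (2/3 * (b * Real.sqrt b - a * Real.sqrt a))
      (2 * (Real.sqrt b - Real.sqrt a)) := by
  ext i j
  fin_cases i <;> fin_cases j <;> simp only [Fin.mk_zero, Fin.mk_one, Fin.isValue]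
  · simpa [Wab, Wex, M1mat] using integral_ofReal_add_sqrt ha hab
  · simpa [Wab, Wex, M1mat] using integral_I_div_sqrt ha hab
  · simpa [Wab, Wex, M1mat] using integral_neg_I_div_sqrt ha hab
  · simpa [Wab, Wex, M1mat] using integral_ofReal_inv_sqrt ha hab

lemma WabInv_eq {a b : ℝ} (ha : 0 ≤ a) (hab : a ≤ b) :
    WabInv a b = M2mat (2/3 * (b * Real.sqrt b - a * Real.sqrt a))
      (2 * (Real.sqrt b - Real.sqrt a)) := by
  ext i j
  fin_cases i <;> fin_cases j <;> simp only [Fin.mk_zero, Fin.mk_one, Fin.isValue]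
  · simpa [WabInv, WexInv, M2mat] using integral_ofReal_inv_sqrt ha hab
  · simpa [WabInv, WexInv, M2mat] using integral_neg_I_div_sqrt ha hab
  · simpa [WabInv, WexInv, M2mat] using integral_I_div_sqrt ha hab
  · simpa [WabInv, WexInv, M2mat] using integral_ofReal_add_sqrt ha hab

end Aux

/-- The Frobenius norm of the product of normalized square roots of `∫ W` and `∫ W⁻¹`
equals `(1/(b−a))√((8/3)((b−a)² − √(ab)(√b−√a)²))` and is at most `2√2/√3`. -/
theorem Wex_A2_frobenius_bound (a b : ℝ) (ha : 0 ≤ a) (hab : a < b) (hb : b ≤ 1) :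
    frobNorm (mpow ((((b - a)⁻¹ : ℝ) : ℂ) • Wab a b) (1 / 2) *
        mpow ((((b - a)⁻¹ : ℝ) : ℂ) • WabInv a b) (1 / 2))
      = (b - a)⁻¹ *
          Real.sqrt ((8 / 3) * ((b - a) ^ 2 -
            Real.sqrt (a * b) * (Real.sqrt b - Real.sqrt a) ^ 2)) ∧
    frobNorm (mpow ((((b - a)⁻¹ : ℝ) : ℂ) • Wab a b) (1 / 2) *
        mpow ((((b - a)⁻¹ : ℝ) : ℂ) • WabInv a b) (1 / 2))
      ≤ 2 * Real.sqrt 2 / Real.sqrt 3 := by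
  have hb0 : 0 ≤ b := le_trans ha hab.le
  have hba : 0 < b - a := sub_pos.mpr hab
  set s : ℝ := Real.sqrt a with hsdef
  set t : ℝ := Real.sqrt b with htdef
  have hs : s ^ 2 = a := Real.sq_sqrt ha
  have ht : t ^ 2 = b := Real.sq_sqrt hb0
  have hs0 : 0 ≤ s := Real.sqrt_nonneg a
  have ht0 : 0 ≤ t := Real.sqrt_nonneg b
  have hst : s ≤ t := Real.sqrt_le_sqrt hab.le
  have hq0 : 0 ≤ 2 * (t - s) := by linarith
  have hp0 : 0 ≤ 2/3 * (b * t - a * s) := by nlinarith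
  have hc0 : 0 ≤ (b - a)⁻¹ := inv_nonneg.mpr hba.le
  have hA : (((b - a)⁻¹ : ℝ) : ℂ) • Wab a b
      = M1mat ((b - a)⁻¹ * (2/3 * (b * t - a * s))) ((b - a)⁻¹ * (2 * (t - s))) := by
    rw [Wab_eq ha hab.le, smul_M1]
  have hB : (((b - a)⁻¹ : ℝ) : ℂ) • WabInv a b
      = M2mat ((b - a)⁻¹ * (2/3 * (b * t - a * s))) ((b - a)⁻¹ * (2 * (t - s))) := by
    rw [WabInv_eq ha hab.le, smul_M2]
  rw [hA, hB]
  set p' : ℝ := (b - a)⁻¹ * (2/3 * (b * t - a * s)) with hp'def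
  set q' : ℝ := (b - a)⁻¹ * (2 * (t - s)) with hq'def
  have hp' : 0 ≤ p' := mul_nonneg hc0 hp0
  have hq' : 0 ≤ q' := mul_nonneg hc0 hq0
  have hApsd := M1_psd hp' hq'
  have hBpsd := M2_psd hp' hq'
  -- the sum of squared norms equals 2 p' q'
  have key : (∑ i, ∑ j, ‖(mpow (M1mat p' q') (1/2) * mpow (M2mat p' q') (1/2)) i j‖ ^ 2)
      = 2 * (p' * q') := by
    have h1 := frob_sq' (mpow (M1mat p' q') (1/2) * mpow (M2mat p' q') (1/2))
    rw [trace_eq' hApsd hBpsd, M1_mul_M2] at h1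
    have h2 : ((((p' * q' : ℝ)) : ℂ) • (1 : Matrix (Fin 2) (Fin 2) ℂ)).trace
        = ((2 * (p' * q') : ℝ) : ℂ) := by
      rw [Matrix.trace_smul, Matrix.trace_one]
      push_cast
      simp
      ring
    rw [h2] at h1
    exact_mod_cast h1.symm
  have hfrob : frobNorm (mpow (M1mat p' q') (1/2) * mpow (M2mat p' q') (1/2))
      = Real.sqrt (2 * (p' * q')) := by
    rw [frobNorm, key]
  have hpq : 2 * (p' * q')
      = ((b - a)⁻¹) ^ 2 * ((8/3) * ((b - a) ^ 2 - Real.sqrt (a * b) * (t - s) ^ 2)) := by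
    rw [hp'def, hq'def, Real.sqrt_mul ha b, ← hsdef, ← htdef]
    linear_combination (((b-a)⁻¹)^2 * (8/3*a - 16/3*b + 8/3*s*t)) * hs
      + (((b-a)⁻¹)^2 * (8/3*b - 16/3*s^2 + 8/3*s*t)) * ht
  set Z : ℝ := (8/3) * ((b - a) ^ 2 - Real.sqrt (a * b) * (t - s) ^ 2) with hZdef
  have heq : frobNorm (mpow (M1mat p' q') (1/2) * mpow (M2mat p' q') (1/2))
      = (b - a)⁻¹ * Real.sqrt Z := by
    rw [hfrob, hpq, Real.sqrt_mul (sq_nonneg _), Real.sqrt_sq hc0]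
  refine ⟨heq, ?_⟩
  rw [heq]
  have hw : 0 ≤ Real.sqrt (a * b) * (t - s) ^ 2 := by positivity
  have hZle : Z ≤ (8/3) * (b - a) ^ 2 := by rw [hZdef]; nlinarith
  have h83 : 2 * Real.sqrt 2 / Real.sqrt 3 = Real.sqrt (8/3) := by
    have h8 : Real.sqrt 8 = 2 * Real.sqrt 2 := by
      rw [show (8:ℝ) = 2^2 * 2 by norm_num, Real.sqrt_mul (by positivity),
        Real.sqrt_sq (by norm_num)]
    rw [Real.sqrt_div (by norm_num) 3, h8]
  calc (b - a)⁻¹ * Real.sqrt Z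
      ≤ (b - a)⁻¹ * Real.sqrt ((8/3) * (b - a) ^ 2) :=
        mul_le_mul_of_nonneg_left (Real.sqrt_le_sqrt hZle) hc0
    _ = (b - a)⁻¹ * (Real.sqrt (8/3) * (b - a)) := by
        rw [Real.sqrt_mul (by norm_num) ((b-a)^2), Real.sqrt_sq hba.le]
    _ = Real.sqrt (8/3) * ((b - a)⁻¹ * (b - a)) := by ring
    _ = Real.sqrt (8/3) := by rw [inv_mul_cancel₀ hba.ne', mul_one]
    _ = 2 * Real.sqrt 2 / Real.sqrt 3 := h83.symm
end
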